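/- Under the annealed-then-constant bandwidth schedule (σ(t) = σ₀e^{−rt} until σ_min, then constant), assume σ_min²K_max² ≥ 2 and set λ_min = σ_min²K_max² exp(−σ_min²K_max²/2). Then for every mode |k| ≤ K_max with σ_min²|k|² ≥ 2, the time T needed so the cumulative decay Λ(k,T) ≥ log(1/ε) satisfies T ≤ (1/r) log(σ₀/σ_min) + (1/λ_min) log(1/ε). -/

import Mathlib

open Real MeasureTheory intervalIntegral

/-- The annealed-then-constant bandwidth schedule. -/
noncomputable def sched (σ₀ σmin r : ℝ) (s : ℝ) : ℝ :=
  if s ≤ 1 / r * Real.log (σ₀ / σmin) then σ₀ * Real.exp (-r * s) else σmin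

/-- Cumulative decay of mode `k` up to time `t`. -/
noncomputable def cumDecay (d : ℕ) (σ₀ σmin r : ℝ) (k : EuclideanSpace ℝ (Fin d))
    (t : ℝ) : ℝ :=
  ∫ s in (0 : ℝ)..t, (sched σ₀ σmin r s) ^ 2 * ‖k‖ ^ 2 *
    Real.exp (-((sched σ₀ σmin r s) ^ 2 * ‖k‖ ^ 2) / 2)

lemma ue_antitone {u v : ℝ} (hu : 2 ≤ u) (huv : u ≤ v) :
    v * Real.exp (-v / 2) ≤ u * Real.exp (-u / 2) := by
  have hu0 : (0:ℝ) < u := by linarith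
  have h1 : (v - u) / u ≤ (v - u) / 2 := by
    apply div_le_div_of_nonneg_left (by linarith) (by norm_num) hu
  have h2 : v / u ≤ Real.exp ((v - u) / 2) := by
    have hexp := Real.add_one_le_exp ((v - u) / 2)
    have : v / u = 1 + (v - u) / u := by field_simp; ring
    linarith
  have key : v ≤ u * Real.exp ((v - u) / 2) := by
    have h3 := mul_le_mul_of_nonneg_left h2 hu0.le
    have h4 : u * (v / u) = v := by field_simp
    linarith
  have h5 : v * Real.exp (-v / 2) ≤ (u * Real.exp ((v - u) / 2)) * Real.exp (-v / 2) :=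
    mul_le_mul_of_nonneg_right key (Real.exp_pos _).le
  calc v * Real.exp (-v / 2) ≤ (u * Real.exp ((v - u) / 2)) * Real.exp (-v / 2) := h5
    _ = u * Real.exp ((v - u) / 2 + -v / 2) := by rw [mul_assoc, ← Real.exp_add]
    _ = u * Real.exp (-u / 2) := by ring_nf

/-- with `λ_min = σ_min²K_max² exp(−σ_min²K_max²/2)` and
`σ_min²K_max² ≥ 2`, every mode with `σ_min²‖k‖² ≥ 2` and `‖k‖ ≤ K_max` accumulates
decay `≥ log(1/ε)` by time `T = (1/r)log(σ₀/σ_min) + (1/λ_min) log(1/ε)`;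
hence the time needed for decay `log(1/ε)` is at most this bound. -/
theorem annealed_convergence_time (d : ℕ) (σ₀ σmin r Kmax ε : ℝ)
    (hσmin : 0 < σmin) (hσ : σmin < σ₀) (hr : 0 < r)
    (hK : 0 < Kmax) (hcut : 2 ≤ σmin ^ 2 * Kmax ^ 2)
    (hε : 0 < ε) (hε1 : ε < 1)
    (k : EuclideanSpace ℝ (Fin d))
    (hk_low : 2 ≤ σmin ^ 2 * ‖k‖ ^ 2) (hk_hi : ‖k‖ ≤ Kmax) :
    Real.log (1 / ε) ≤
      cumDecay d σ₀ σmin r k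
        (1 / r * Real.log (σ₀ / σmin) +
          Real.log (1 / ε) /
            (σmin ^ 2 * Kmax ^ 2 * Real.exp (-(σmin ^ 2 * Kmax ^ 2) / 2))) := by
  set T₀ : ℝ := 1 / r * Real.log (σ₀ / σmin) with hT₀def
  set lam : ℝ := σmin ^ 2 * Kmax ^ 2 * Real.exp (-(σmin ^ 2 * Kmax ^ 2) / 2) with hlamdef
  set L : ℝ := Real.log (1 / ε) with hLdef
  have hratio : (1:ℝ) < σ₀ / σmin := (one_lt_div hσmin).mpr hσ
  have hT₀ : 0 ≤ T₀ := by
    have := Real.log_pos hratio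
    positivity
  have hlam : 0 < lam := by
    have : (0:ℝ) < σmin ^ 2 * Kmax ^ 2 := by positivity
    positivity
  have hL : 0 < L := Real.log_pos (by rw [lt_div_iff₀ hε]; linarith)
  set T : ℝ := T₀ + L / lam with hTdef
  have hT₀T : T₀ ≤ T := by
    have h0 : 0 ≤ L / lam := by positivity
    show T₀ ≤ T₀ + L / lam
    linarith
  -- value at the breakpoint
  have hbreak : σ₀ * Real.exp (-r * T₀) = σmin := by
    have h1 : -r * T₀ = -Real.log (σ₀ / σmin) := by
      rw [hT₀def]; field_simp
    rw [h1, Real.exp_neg, Real.exp_log (by positivity)]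
    have hσ₀ : σ₀ ≠ 0 := (hσmin.trans hσ).ne'
    field_simp
  have hsched_const : ∀ s, T₀ ≤ s → sched σ₀ σmin r s = σmin := by
    intro s hs
    unfold sched
    rcases eq_or_lt_of_le hs with h | h
    · rw [if_pos (le_of_eq h.symm), ← h]; exact hbreak
    · rw [if_neg (not_le.mpr h)]
  have hsc : Continuous (sched σ₀ σmin r) := by
    unfold sched
    apply Continuous.if_le (by continuity) continuous_const continuous_id continuous_const
    intro s hs
    simp only [id_eq] at hs
    rw [hs]
    exact hbreak
  set f : ℝ → ℝ := fun s => (sched σ₀ σmin r s) ^ 2 * ‖k‖ ^ 2 *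
    Real.exp (-((sched σ₀ σmin r s) ^ 2 * ‖k‖ ^ 2) / 2) with hfdef
  have hfc : Continuous f := by
    apply Continuous.mul
    · exact ((hsc.pow 2).mul continuous_const)
    · exact Real.continuous_exp.comp (by continuity)
  set c : ℝ := σmin ^ 2 * ‖k‖ ^ 2 * Real.exp (-(σmin ^ 2 * ‖k‖ ^ 2) / 2) with hcdef
  have hcge : lam ≤ c := by
    have huv : σmin ^ 2 * ‖k‖ ^ 2 ≤ σmin ^ 2 * Kmax ^ 2 := by
      have : ‖k‖ ^ 2 ≤ Kmax ^ 2 := by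
        apply pow_le_pow_left₀ (norm_nonneg k) hk_hi
      exact mul_le_mul_of_nonneg_left this (sq_nonneg σmin)
    have := ue_antitone hk_low huv
    simpa [hlamdef, hcdef, neg_div] using this
  have hsplit : cumDecay d σ₀ σmin r k T =
      (∫ s in (0:ℝ)..T₀, f s) + ∫ s in T₀..T, f s := by
    rw [cumDecay]
    exact (intervalIntegral.integral_add_adjacent_intervals
      (hfc.intervalIntegrable _ _) (hfc.intervalIntegrable _ _)).symm
  have h2 : ∫ s in T₀..T, f s = (T - T₀) * c := by
    have : ∫ s in T₀..T, f s = ∫ s in T₀..T, c := by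
      apply intervalIntegral.integral_congr
      intro s hs
      rw [Set.uIcc_of_le hT₀T] at hs
      rw [hfdef]
      simp only
      rw [hsched_const s hs.1, hcdef]
    rw [this, intervalIntegral.integral_const, smul_eq_mul]
  have h1 : 0 ≤ ∫ s in (0:ℝ)..T₀, f s := by
    apply intervalIntegral.integral_nonneg hT₀
    intro s _
    rw [hfdef]
    positivity
  have hfinal : L ≤ (T - T₀) * c := by
    have hTT : T - T₀ = L / lam := by rw [hTdef]; ring
    rw [hTT]
    have : L / lam * lam ≤ L / lam * c :=
      mul_le_mul_of_nonneg_left hcge (by positivity)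
    rwa [div_mul_cancel₀ L hlam.ne'] at this
  calc L ≤ (T - T₀) * c := hfinal
    _ ≤ (∫ s in (0:ℝ)..T₀, f s) + ∫ s in T₀..T, f s := by rw [← h2]; linarith
    _ = cumDecay d σ₀ σmin r k T := hsplit.symm
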